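/- Let f : U → ℝ² be a continuously differentiable map on an open set U ⊆ ℝⁿ (n ≥ 2) such that at every point of U the differential Df is surjective and its restriction to the orthogonal complement of its kernel has operator norm of inverse bounded by a constant c (i.e., ‖Df(x) v‖ ≥ c⁻¹‖v‖ for all v ⊥ ker Df(x)). Then for every compact K ⊆ U there is a constant C such that for every r > 0 and every disk D' ⊆ ℝ² of radius r, the Lebesgue measure of f⁻¹(D') ∩ K is at most C·r². -/

import Mathlib

/-!
Near a point `x₀` where `Df` is onto, `g x = (f x, P x)`, with `P` a continuous projection
onto `ker Df(x₀)`, has invertible strict derivative at `x₀`. Its local inverse is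
Lipschitz-close to a linear map, so it enlarges measure at most by a constant factor; since `g`
maps `f⁻¹(D)` near `x₀` into `D × (bounded set)`, the measure of `f⁻¹(D)` near `x₀` is
`O(measure of D) = O(r²)`.
Compactness of `K` glues finitely many such local bounds.
-/

open MeasureTheory Measure Metric Set Filter Function
open scoped NNReal ENNReal Topology

theorem ContinuousLinearMap.exists_equiv_prod_ker_of_surjective {E F : Type*}
    [NormedAddCommGroup E] [NormedSpace ℝ E] [FiniteDimensional ℝ E]
    [NormedAddCommGroup F] [NormedSpace ℝ F] [CompleteSpace F] (L : E →L[ℝ] F)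
    (hL : Surjective L) : ∃ P : E →L[ℝ] L.ker, ∃ A : E ≃L[ℝ] F × L.ker,
      (A : E →L[ℝ] F × L.ker) = L.prod P := by
  obtain ⟨P, hP⟩ := Submodule.ClosedComplemented.of_finiteDimensional L.ker
  refine ⟨P, L.equivProdOfSurjectiveOfIsCompl P (LinearMap.range_eq_top.mpr hL)
    (LinearMap.range_eq_of_proj hP) (LinearMap.isCompl_of_proj hP),
    ContinuousLinearMap.ext fun _ => rfl⟩

section

variable {E F G : Type*}
  [NormedAddCommGroup E] [NormedSpace ℝ E] [MeasurableSpace E] [BorelSpace E]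
  [NormedAddCommGroup F] [NormedSpace ℝ F] [MeasurableSpace F] [BorelSpace F]
  [NormedAddCommGroup G] [NormedSpace ℝ G] [MeasurableSpace G] [BorelSpace G]
  (μ : Measure E) [μ.IsAddHaarMeasure]

theorem ContinuousLinearEquiv.exists_measure_preimage_eq [FiniteDimensional ℝ G]
    (ν : Measure G) [ν.IsAddHaarMeasure] (A : E ≃L[ℝ] G) :
    ∃ κ : ℝ≥0, ∀ s, μ (A ⁻¹' s) = κ * ν s := by
  have := A.isAddHaarMeasure_map μ
  refine ⟨addHaarScalarFactor (μ.map A) ν, fun s => ?_⟩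
  calc μ (A ⁻¹' s) = μ.map A s := (A.toHomeomorph.toMeasurableEquiv.map_apply s).symm
    _ = _ := congrArg (fun m : Measure G => m s) (isAddLeftInvariant_eq_smul (μ.map A) ν)

theorem HasStrictFDerivAt.exists_nhds_measure_image_le [FiniteDimensional ℝ G]
    (ν : Measure G) [ν.IsAddHaarMeasure] {h : G → E} {B : G ≃L[ℝ] E} {y₀ : G}
    (hh : HasStrictFDerivAt h (B : G →L[ℝ] E) y₀) :
    ∃ W ∈ 𝓝 y₀, ∃ C : ℝ≥0, ∀ T ⊆ W, μ (h '' T) ≤ C * ν T := by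
  obtain ⟨κ, hκ⟩ := B.symm.exists_measure_preimage_eq μ ν
  have hid : HasStrictFDerivAt (B.symm ∘ h) (ContinuousLinearMap.id ℝ G) y₀ := by
    simpa [Function.comp_def] using (B.symm : E →L[ℝ] G).hasStrictFDerivAt.comp y₀ hh
  have hdet : ENNReal.ofReal |(ContinuousLinearMap.id ℝ G).det| < (2 : ℝ≥0) := by
    simp [ContinuousLinearMap.det]
  obtain ⟨δ, hδ, δpos⟩ :=
    ((addHaar_image_le_mul_of_det_lt ν _ hdet).and self_mem_nhdsWithin).exists
  obtain ⟨W, hW, happrox⟩ := hid.approximates_deriv_on_nhds (Or.inr δpos)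
  refine ⟨W, hW, κ * 2, fun T hT => ?_⟩
  have hpre : h '' T = B.symm ⁻¹' ((B.symm ∘ h) '' T) := by
    rw [image_comp, preimage_image_eq _ B.symm.injective]
  calc μ (h '' T) = κ * ν ((B.symm ∘ h) '' T) := by rw [hpre, hκ]
    _ ≤ κ * (2 * ν T) := by gcongr; exact hδ T _ (happrox.mono_set hT)
    _ = ↑(κ * 2) * ν T := by push_cast; ring

theorem HasStrictFDerivAt.exists_nhds_measure_le_image [FiniteDimensional ℝ E]
    [FiniteDimensional ℝ G] (ν : Measure G) [ν.IsAddHaarMeasure]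
    {g : E → G} {A : E ≃L[ℝ] G} {x₀ : E}
    (hg : HasStrictFDerivAt g (A : E →L[ℝ] G) x₀) :
    ∃ V ∈ 𝓝 x₀, ∃ C : ℝ≥0, ∀ s ⊆ V, μ s ≤ C * ν (g '' s) := by
  set g' := hg.localInverse g A x₀
  obtain ⟨W, hW, C, hC⟩ := hg.to_localInverse.exists_nhds_measure_image_le μ ν
  refine ⟨{x | g' (g x) = x} ∩ g ⁻¹' W,
    inter_mem hg.eventually_left_inverse (hg.continuousAt.preimage_mem_nhds hW), C,
    fun s hs => ?_⟩
  have hsub : s ⊆ g' '' (g '' s) := fun x hx => ⟨g x, mem_image_of_mem g hx, (hs hx).1⟩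
  exact (measure_mono hsub).trans (hC _ (image_subset_iff.mpr fun x hx => (hs hx).2))

theorem HasStrictFDerivAt.exists_nhds_measure_preimage_inter_le [FiniteDimensional ℝ E]
    [FiniteDimensional ℝ F] (ν : Measure F) [ν.IsAddHaarMeasure]
    {f : E → F} {L : E →L[ℝ] F} {x₀ : E}
    (hf : HasStrictFDerivAt f L x₀) (hL : Surjective L) :
    ∃ V ∈ 𝓝 x₀, ∃ C : ℝ≥0, ∀ t, μ (f ⁻¹' t ∩ V) ≤ C * ν t := by
  obtain ⟨P, A, hA⟩ := L.exists_equiv_prod_ker_of_surjective hL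
  let ρ : Measure L.ker := addHaar
  have hg : HasStrictFDerivAt (fun x => (f x, P x)) (A : E →L[ℝ] F × L.ker) x₀ :=
    hA ▸ hf.prodMk P.hasStrictFDerivAt
  obtain ⟨V, hV, C, hC⟩ := hg.exists_nhds_measure_le_image μ (ν.prod ρ)
  set m := ρ (P '' closedBall x₀ 1)
  have hm : m ≠ ⊤ :=
    ((isCompact_closedBall x₀ 1).image P.continuous).measure_lt_top.ne
  refine ⟨V ∩ closedBall x₀ 1, inter_mem hV (closedBall_mem_nhds x₀ one_pos),
    C * m.toNNReal, fun t => ?_⟩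
  have himage : (fun x => (f x, P x)) '' (f ⁻¹' t ∩ (V ∩ closedBall x₀ 1)) ⊆
      t ×ˢ (P '' closedBall x₀ 1) :=
    image_subset_iff.mpr fun x hx => ⟨hx.1, mem_image_of_mem P hx.2.2⟩
  calc μ (f ⁻¹' t ∩ (V ∩ closedBall x₀ 1))
      ≤ C * ν.prod ρ (t ×ˢ (P '' closedBall x₀ 1)) :=
        (hC _ (inter_subset_right.trans inter_subset_left)).trans (by gcongr)
    _ = ↑(C * m.toNNReal) * ν t := by
        rw [prod_prod, ENNReal.coe_mul, ENNReal.coe_toNNReal hm]; ring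

theorem IsCompact.exists_measure_preimage_inter_le [FiniteDimensional ℝ E]
    [FiniteDimensional ℝ F] (ν : Measure F) [ν.IsAddHaarMeasure]
    {f : E → F} {f' : E → E →L[ℝ] F} {K : Set E}
    (hK : IsCompact K) (hf : ∀ x ∈ K, HasStrictFDerivAt f (f' x) x)
    (hsurj : ∀ x ∈ K, Surjective (f' x)) :
    ∃ C : ℝ≥0, ∀ t, μ (f ⁻¹' t ∩ K) ≤ C * ν t := by
  refine hK.induction_on ⟨0, fun t => by simp⟩ (fun s s' hss' ⟨C, hC⟩ => ⟨C, fun t =>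
    (measure_mono (inter_subset_inter_right _ hss')).trans (hC t)⟩)
    (fun s s' ⟨C, hC⟩ ⟨C', hC'⟩ => ⟨C + C', fun t => ?_⟩) fun x hx => ?_
  · calc μ (f ⁻¹' t ∩ (s ∪ s')) ≤ μ (f ⁻¹' t ∩ s) + μ (f ⁻¹' t ∩ s') := by
          rw [inter_union_distrib_left]; exact measure_union_le _ _
      _ ≤ ↑(C + C') * ν t := by rw [ENNReal.coe_add, add_mul]; gcongr <;> simp [hC, hC']
  · obtain ⟨V, hV, hCV⟩ := (hf x hx).exists_nhds_measure_preimage_inter_le μ ν (hsurj x hx)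
    exact ⟨V, mem_nhdsWithin_of_mem_nhds hV, hCV⟩

end

theorem stmt_14_general (n : ℕ)
    (U : Set (EuclideanSpace ℝ (Fin n))) (hU : IsOpen U)
    (f : EuclideanSpace ℝ (Fin n) → EuclideanSpace ℝ (Fin 2))
    (hf : ContDiffOn ℝ 1 f U)
    (hsurj : ∀ x ∈ U, Function.Surjective (fderiv ℝ f x)) :
    ∀ K : Set (EuclideanSpace ℝ (Fin n)), K ⊆ U → IsCompact K →
      ∃ C : ℝ, ∀ r > (0 : ℝ), ∀ y : EuclideanSpace ℝ (Fin 2),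
        volume (f ⁻¹' (Metric.ball y r) ∩ K) ≤ ENNReal.ofReal (C * r ^ 2) := by
  intro K hKU hK
  have hstrict : ∀ x ∈ K, HasStrictFDerivAt f (fderiv ℝ f x) x := fun x hx =>
    (hf.contDiffAt (hU.mem_nhds (hKU hx))).hasStrictFDerivAt one_ne_zero
  obtain ⟨C, hC⟩ := hK.exists_measure_preimage_inter_le volume volume hstrict
    fun x hx => hsurj x (hKU hx)
  set B := volume (ball (0 : EuclideanSpace ℝ (Fin 2)) 1)
  refine ⟨C * B.toReal, fun r hr y => ?_⟩
  calc volume (f ⁻¹' ball y r ∩ K) ≤ C * volume (ball y r) := hC _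
    _ = ENNReal.ofReal (C * B.toReal * r ^ 2) := by
      rw [addHaar_ball _ _ hr.le, finrank_euclideanSpace_fin,
        ENNReal.ofReal_mul (by positivity), ENNReal.ofReal_mul (by positivity),
        ENNReal.ofReal_toReal measure_ball_lt_top.ne,
        ENNReal.ofReal_coe_nnreal]
      ring

/-- A C¹ submersion `f : U → ℝ²` whose differential is uniformly bounded below on the
orthogonal complement of its kernel pulls back disks of radius `r` to sets of measure
at most `C r²` on any compact subset of `U`. -/
theorem stmt_14 (n : ℕ) (hn : 2 ≤ n)
    (U : Set (EuclideanSpace ℝ (Fin n))) (hU : IsOpen U)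
    (f : EuclideanSpace ℝ (Fin n) → EuclideanSpace ℝ (Fin 2))
    (hf : ContDiffOn ℝ 1 f U)
    (c : ℝ) (hc : 0 < c)
    (hsurj : ∀ x ∈ U, Function.Surjective (fderiv ℝ f x))
    (hlow : ∀ x ∈ U, ∀ v ∈ (LinearMap.ker (fderiv ℝ f x).toLinearMap)ᗮ,
      c⁻¹ * ‖v‖ ≤ ‖fderiv ℝ f x v‖) :
    ∀ K : Set (EuclideanSpace ℝ (Fin n)), K ⊆ U → IsCompact K →
      ∃ C : ℝ, ∀ r > (0 : ℝ), ∀ y : EuclideanSpace ℝ (Fin 2),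
        volume (f ⁻¹' (Metric.ball y r) ∩ K) ≤ ENNReal.ofReal (C * r ^ 2) :=
  stmt_14_general n U hU f hf hsurj
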